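/- arXiv:2312.16696 — 2 statements merged into one kernel-verified Lean document; each statement's English description precedes it below -/
import Mathlib

section
/- For N ≥ 3 and c_N = Γ(N/2)/(2(N-2)π^{N/2}), the L^q norm of the function G(x) = c_N(|x|^{2-N} - 1) over the unit ball B_1 ⊂ ℝ^N satisfies ‖G‖_{L^q(B_1)}^q = c_N^q · π^{N/2} Γ(q+1) Γ(2/(N-2) - q + 1) / ( Γ(N/2 + 1) Γ(N/(N-2)) ), for any real q with 1 ≤ q < N/(N-2). -/
open MeasureTheory Real Set

/-!
In polar coordinates the integral becomes `N |B₁| c_N^q ∫₀¹ r^(N-1-(N-2)q) (1 - r^(N-2))^q dr`,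
and the substitution `u = r^(N-2)` turns the radial integral into the Beta integral
`B(2/(N-2) - q + 1, q + 1) / (N-2)`, which converges exactly when `-1 < q < N/(N-2)`.
The factor `N/(N-2)` left over is absorbed by `Γ(N/(N-2) + 1) = N/(N-2) · Γ(N/(N-2))`.
-/

theorem setIntegral_ball_fun_norm_addHaar {E F : Type*} [NormedAddCommGroup E]
    [NormedSpace ℝ E] [FiniteDimensional ℝ E] [Nontrivial E] [MeasurableSpace E] [BorelSpace E]
    [NormedAddCommGroup F] [NormedSpace ℝ F] (μ : Measure E) [μ.IsAddHaarMeasure] (f : ℝ → F)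
    (R : ℝ) :
    ∫ x in Metric.ball (0 : E) R, f ‖x‖ ∂μ =
      Module.finrank ℝ E • μ.real (Metric.ball 0 1) •
        ∫ r in Ioo 0 R, r ^ (Module.finrank ℝ E - 1) • f r := by
  have hball : ∀ x : E, (Metric.ball (0 : E) R).indicator (fun x => f ‖x‖) x
      = (Iio R).indicator f ‖x‖ := fun x => by
    by_cases hx : ‖x‖ < R <;> simp [hx]
  have hIoo : ∀ r : ℝ, r ^ (Module.finrank ℝ E - 1) • (Iio R).indicator f r
      = (Iio R).indicator (fun r => r ^ (Module.finrank ℝ E - 1) • f r) r := fun r => by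
    by_cases hr : r < R <;> simp [hr]
  rw [← integral_indicator measurableSet_ball, funext hball, integral_fun_norm_addHaar,
    funext hIoo, setIntegral_indicator measurableSet_Iio, Ioi_inter_Iio]

theorem integral_Ioo_rpow_mul_one_sub_rpow {a b : ℝ} (ha : 0 < a) (hb : 0 < b) :
    ∫ x in Ioo (0 : ℝ) 1, x ^ (a - 1) * (1 - x) ^ (b - 1) =
      Gamma a * Gamma b / Gamma (a + b) := by
  have hbeta : Complex.betaIntegral a b =
      ((∫ x in (0 : ℝ)..1, x ^ (a - 1) * (1 - x) ^ (b - 1) : ℝ) : ℂ) := by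
    rw [Complex.betaIntegral, ← intervalIntegral.integral_ofReal]
    refine intervalIntegral.integral_congr fun x hx => ?_
    rw [uIcc_of_le zero_le_one] at hx
    rw [Complex.ofReal_mul, Complex.ofReal_cpow hx.1, Complex.ofReal_cpow (sub_nonneg.2 hx.2)]
    push_cast
    ring
  have h := Complex.betaIntegral_eq_Gamma_mul_div a b (by simpa using ha) (by simpa using hb)
  rw [hbeta, ← Complex.ofReal_add, Complex.Gamma_ofReal, Complex.Gamma_ofReal,
    Complex.Gamma_ofReal] at h
  rw [← integral_Ioc_eq_integral_Ioo, ← intervalIntegral.integral_of_le zero_le_one]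
  exact_mod_cast h

theorem integral_comp_rpow_Ioo_zero_one {E : Type*} [NormedAddCommGroup E] [NormedSpace ℝ E]
    (g : ℝ → E) {p : ℝ} (hp : 0 < p) :
    ∫ x in Ioo (0 : ℝ) 1, (p * x ^ (p - 1)) • g (x ^ p) = ∫ y in Ioo (0 : ℝ) 1, g y := by
  have h := integral_comp_rpow_Ioi_of_pos (g := (Iio 1).indicator g) hp
  rw [setIntegral_indicator measurableSet_Iio, Ioi_inter_Iio] at h
  rw [← h, ← Ioi_inter_Iio, ← setIntegral_indicator measurableSet_Iio]
  refine setIntegral_congr_fun measurableSet_Ioi fun x (hx : 0 < x) => ?_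
  have hlt : x ^ p < 1 ↔ x < 1 := by simpa using rpow_lt_rpow_iff hx.le zero_le_one hp
  by_cases hx1 : x < 1 <;> simp [hx1, hlt]

theorem integral_Ioo_rpow_mul_one_sub_rpow_rpow {s p q : ℝ} (hp : 0 < p) (hs : -1 < s)
    (hq : -1 < q) :
    ∫ x in Ioo (0 : ℝ) 1, x ^ s * (1 - x ^ p) ^ q =
      Gamma ((s + 1) / p) * Gamma (q + 1) / (p * Gamma ((s + 1) / p + q + 1)) := by
  set a := (s + 1) / p
  have ha : 0 < a := div_pos (by linarith) hp
  have hpa : p * a = s + 1 := mul_div_cancel₀ _ hp.ne'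
  have hsub := integral_comp_rpow_Ioo_zero_one (fun u => u ^ (a - 1) * (1 - u) ^ (q + 1 - 1)) hp
  rw [integral_Ioo_rpow_mul_one_sub_rpow ha (by linarith), ← add_assoc] at hsub
  calc ∫ x in Ioo (0 : ℝ) 1, x ^ s * (1 - x ^ p) ^ q
      = p⁻¹ * ∫ x in Ioo (0 : ℝ) 1,
          (p * x ^ (p - 1)) • ((x ^ p) ^ (a - 1) * (1 - x ^ p) ^ (q + 1 - 1)) := by
        rw [← integral_const_mul]
        refine setIntegral_congr_fun measurableSet_Ioo fun x hx => ?_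
        have hpow : x ^ (p - 1) * (x ^ p) ^ (a - 1) = x ^ s := by
          rw [← rpow_mul hx.1.le, ← rpow_add hx.1]
          congr 1
          linear_combination hpa
        rw [smul_eq_mul, add_sub_cancel_right, ← hpow]
        field_simp
    _ = Gamma a * Gamma (q + 1) / (p * Gamma (a + q + 1)) := by
        rw [hsub]
        field_simp

theorem abs_mul_rpow_neg_sub_one_rpow {c r d q : ℝ} (hc : 0 ≤ c) (hr : 0 < r) (hrd : r ^ d ≤ 1) :
    |c * (r ^ (-d) - 1)| ^ q = c ^ q * r ^ (-d * q) * (1 - r ^ d) ^ q := by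
  have hfactor : r ^ (-d) - 1 = r ^ (-d) * (1 - r ^ d) := by
    rw [mul_sub, mul_one, ← rpow_add hr, neg_add_cancel, rpow_zero]
  rw [hfactor, abs_of_nonneg (by have := rpow_pos_of_pos hr (-d); positivity),
    mul_rpow hc (by positivity), mul_rpow (by positivity) (by linarith), rpow_mul hr.le, mul_assoc]

theorem volume_real_ball_zero_one {E : Type*} [NormedAddCommGroup E] [InnerProductSpace ℝ E]
    [FiniteDimensional ℝ E] [MeasurableSpace E] [BorelSpace E] [Nontrivial E] :
    volume.real (Metric.ball (0 : E) 1) =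
      π ^ ((Module.finrank ℝ E : ℝ) / 2) / Gamma (Module.finrank ℝ E / 2 + 1) := by
  rw [measureReal_def, InnerProductSpace.volume_ball, ENNReal.ofReal_one, one_pow, one_mul,
    ENNReal.toReal_ofReal (by positivity), sqrt_eq_rpow, ← rpow_natCast, ← rpow_mul pi_nonneg]
  ring_nf

/-- for N ≥ 3, c_N = Γ(N/2)/(2(N-2)π^{N/2}) and G(x) = c_N(|x|^{2-N} - 1),
one has ‖G‖_{L^q(B_1)}^q = c_N^q · π^{N/2} Γ(q+1) Γ(2/(N-2) - q + 1) /
( Γ(N/2 + 1) Γ(N/(N-2)) ) for 1 ≤ q < N/(N-2). -/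
theorem green_ball_Lq_norm (N : ℕ) (hN : 3 ≤ N) (q : ℝ) (hq1 : 1 ≤ q)
    (hq2 : q < (N : ℝ) / ((N : ℝ) - 2)) :
    (∫ x in Metric.ball (0 : EuclideanSpace ℝ (Fin N)) 1,
        |Real.Gamma ((N : ℝ) / 2) / (2 * ((N : ℝ) - 2) * π ^ ((N : ℝ) / 2)) *
          (‖x‖ ^ ((2 : ℝ) - (N : ℝ)) - 1)| ^ q)
      = (Real.Gamma ((N : ℝ) / 2) / (2 * ((N : ℝ) - 2) * π ^ ((N : ℝ) / 2))) ^ q *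
          π ^ ((N : ℝ) / 2) * Real.Gamma (q + 1) * Real.Gamma (2 / ((N : ℝ) - 2) - q + 1) /
          (Real.Gamma ((N : ℝ) / 2 + 1) * Real.Gamma ((N : ℝ) / ((N : ℝ) - 2))) := by
  have hd : (0 : ℝ) < N - 2 := by
    have : (3 : ℝ) ≤ N := by exact_mod_cast hN
    linarith
  have hqd : q * (N - 2) < N := (lt_div_iff₀ hd).1 hq2
  have : NeZero N := ⟨by omega⟩
  set c := Gamma ((N : ℝ) / 2) / (2 * ((N : ℝ) - 2) * π ^ ((N : ℝ) / 2))
  have hc : 0 ≤ c := by positivity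
  have hprofile : ∀ r ∈ Ioo (0 : ℝ) 1, r ^ (N - 1) • |c * (r ^ ((2 : ℝ) - N) - 1)| ^ q =
      c ^ q * (r ^ ((N : ℝ) - 1 + -(N - 2) * q) * (1 - r ^ ((N : ℝ) - 2)) ^ q) := by
    rintro r ⟨hr0, hr1⟩
    rw [show (2 : ℝ) - N = -(N - 2) by ring,
      abs_mul_rpow_neg_sub_one_rpow hc hr0 (rpow_le_one hr0.le hr1.le hd.le), smul_eq_mul,
      rpow_add hr0, ← rpow_natCast, Nat.cast_sub (by omega), Nat.cast_one]
    ring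
  rw [setIntegral_ball_fun_norm_addHaar volume (fun r => |c * (r ^ ((2 : ℝ) - N) - 1)| ^ q),
    volume_real_ball_zero_one, finrank_euclideanSpace_fin,
    setIntegral_congr_fun measurableSet_Ioo hprofile, integral_const_mul,
    integral_Ioo_rpow_mul_one_sub_rpow_rpow hd (by linarith) (by linarith), nsmul_eq_mul,
    smul_eq_mul]
  have hGamma_arg : ((N : ℝ) - 1 + -(N - 2) * q + 1) / (N - 2) = 2 / ((N : ℝ) - 2) - q + 1 := by
    field_simp
    ring
  have hsum : 2 / ((N : ℝ) - 2) - q + 1 + q + 1 = N / (N - 2) + 1 := by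
    field_simp
    ring
  rw [hGamma_arg, hsum, Gamma_add_one (s := (N : ℝ) / (N - 2)) (by positivity)]
  field_simp
end

section
/- Let X be a real normed space, E : X → (-∞, ∞] convex, G : X → ℝ convex and continuous, and suppose u ∈ X satisfies E(u) = min{E(v) : v ∈ X, G(v) = 1} with G(u) = 1. Assume there exists ũ ∈ X with E(u + ũ) < E(u), G(u + ũ) < 1, and E(u - ũ) < ∞. Then every subgradient of G at u lies in ⋃_{t ≥ 0} t·∂E(u), i.e., ∂G(u) ⊆ ⋃_{t≥0} t ∂E(u), where ∂F(w) = {f ∈ X* : F(v) ≥ F(w) + f(v - w) for all v ∈ X} denotes the convex subdifferential. -/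
/-!
If `f ∈ ∂G(u)`, the hyperplane `{f = f u}` lies in `{G ≥ 1}`. Since `G (u + ũ) < 1` and
`E (u + ũ) < E u`, a point `w` of `{G ≥ 1}` with `E w < E u` is impossible: by the intermediate
value theorem the segment from `u + ũ` to `w` meets `{G = 1}`, where convexity makes `E < E u`.
So `u` minimises `E` on the hyperplane.
A convex function minimised at `u` on a hyperplane `{ℓ = ℓ u}` and finite at points on both sides
of it has a subgradient `m • ℓ` at `u`: the slopes seen from `u` on one side are bounded by those on
the other, and `m` is any number in between. Here `m > 0` because `E (u + ũ) < E u` and `f ũ < 0`, and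
then `f = m⁻¹ • (m • f)`.
-/

def ERealConvex {X : Type*} [AddCommGroup X] [Module ℝ X] (φ : X → EReal) : Prop :=
  ∀ x y : X, ∀ a b : ℝ, 0 ≤ a → 0 ≤ b → a + b = 1 →
    φ (a • x + b • y) ≤ (a : EReal) * φ x + (b : EReal) * φ y

theorem LinearMap.exists_mem_segment_apply_eq {X : Type*} [AddCommGroup X] [Module ℝ X]
    (ℓ : X →ₗ[ℝ] ℝ) {x y : X} {s : ℝ} (hx : ℓ x ≤ s) (hy : s ≤ ℓ y) :
    ∃ z ∈ segment ℝ x y, ℓ z = s := by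
  have hs : s ∈ ℓ.toAffineMap '' segment ℝ x y := by
    rw [image_segment, LinearMap.coe_toAffineMap, segment_eq_Icc (hx.trans hy)]
    exact ⟨hx, hy⟩
  simpa using hs

namespace ERealConvex

variable {X : Type*} [AddCommGroup X] [Module ℝ X] {φ : X → EReal}

theorem le_max_of_mem_segment (hφ : ERealConvex φ) {x y z : X} (hz : z ∈ segment ℝ x y) :
    φ z ≤ max (φ x) (φ y) := by
  obtain ⟨a, b, ha, hb, hab, rfl⟩ := hz
  calc φ (a • x + b • y) ≤ (a : EReal) * φ x + (b : EReal) * φ y := hφ x y a b ha hb hab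
    _ ≤ (a : EReal) * max (φ x) (φ y) + (b : EReal) * max (φ x) (φ y) := by
      gcongr
      · exact le_max_left _ _
      · exact le_max_right _ _
    _ = max (φ x) (φ y) := by
      rw [← EReal.right_distrib_of_nonneg (by exact_mod_cast ha) (by exact_mod_cast hb),
        ← EReal.coe_add, hab, EReal.coe_one, one_mul]

theorem le_coe_of_eq_coe (hφ : ERealConvex φ) {x y : X} {c d a b : ℝ} (hx : φ x = c)
    (hy : φ y = d) (ha : 0 ≤ a) (hb : 0 ≤ b) (hab : a + b = 1) :
    φ (a • x + b • y) ≤ ((a * c + b * d : ℝ) : EReal) := by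
  simpa only [hx, hy, EReal.coe_add, EReal.coe_mul] using hφ x y a b ha hb hab

theorem isMinOn_setOf_le_of_isMinOn_setOf_eq [TopologicalSpace X] [ContinuousAdd X]
    [ContinuousSMul ℝ X] (hφ : ERealConvex φ) {G : X → ℝ} (hG : Continuous G) {c : ℝ} {u p : X}
    (hmin : IsMinOn φ {v | G v = c} u) (hp : G p ≤ c) (hpu : φ p < φ u) :
    IsMinOn φ {v | c ≤ G v} u := by
  refine isMinOn_iff.2 fun w hw => ?_
  by_contra! hwu
  obtain ⟨z, hz, hGz⟩ := (convex_segment p w).isPreconnected.intermediate_value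
    (left_mem_segment ℝ p w) (right_mem_segment ℝ p w) hG.continuousOn ⟨hp, hw⟩
  exact (not_le.2 ((hφ.le_max_of_mem_segment hz).trans_lt (max_lt hpu hwu))) (hmin hGz)

theorem slope_le_slope_of_isMinOn_hyperplane (hφ : ERealConvex φ) (ℓ : X →ₗ[ℝ] ℝ) {u v₁ v₂ : X}
    (hmin : IsMinOn φ {w | ℓ w = ℓ u} u) {e c₁ c₂ : ℝ} (he : φ u = e) (h₁ : φ v₁ = c₁)
    (h₂ : φ v₂ = c₂) (hv₁ : ℓ v₁ < ℓ u) (hv₂ : ℓ u < ℓ v₂) :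
    (e - c₁) / (ℓ u - ℓ v₁) ≤ (c₂ - e) / (ℓ v₂ - ℓ u) := by
  obtain ⟨z, ⟨a, b, ha, hb, hab, rfl⟩, hℓz⟩ := ℓ.exists_mem_segment_apply_eq hv₁.le hv₂.le
  have hez : e ≤ a * c₁ + b * c₂ := by
    have := (hmin hℓz).trans (hφ.le_coe_of_eq_coe h₁ h₂ ha hb hab)
    rwa [he, EReal.coe_le_coe_iff] at this
  simp only [map_add, map_smul, smul_eq_mul] at hℓz
  rw [div_le_div_iff₀ (by linarith) (by linarith), ← hℓz]
  obtain rfl : b = 1 - a := by linarith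
  nlinarith [mul_le_mul_of_nonneg_right hez (sub_nonneg.2 (hv₁.trans hv₂).le)]

theorem exists_slope_of_isMinOn_hyperplane (hφ : ERealConvex φ) (hbot : ∀ x, φ x ≠ ⊥)
    (ℓ : X →ₗ[ℝ] ℝ) {u p q : X} (hmin : IsMinOn φ {w | ℓ w = ℓ u} u) (hp : ℓ p < ℓ u)
    (hq : ℓ u < ℓ q) (hpφ : φ p ≠ ⊤) (hqφ : φ q ≠ ⊤) :
    ∃ m : ℝ, ∀ v, φ u + ((m * (ℓ v - ℓ u) : ℝ) : EReal) ≤ φ v := by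
  have hcoe : ∀ v, φ v ≠ ⊤ → φ v = ((φ v).toReal : EReal) :=
    fun v hv => (EReal.coe_toReal hv (hbot v)).symm
  obtain ⟨e, he⟩ : ∃ e : ℝ, φ u = e := by
    obtain ⟨z, hz, hℓz⟩ := ℓ.exists_mem_segment_apply_eq hp.le hq.le
    have hu : φ u < ⊤ := (hmin hℓz).trans_lt
      ((hφ.le_max_of_mem_segment hz).trans_lt (max_lt hpφ.lt_top hqφ.lt_top))
    exact ⟨_, hcoe u hu.ne⟩
  set S : Set ℝ := {r | ∃ v, φ v ≠ ⊤ ∧ ℓ v < ℓ u ∧ r = (e - (φ v).toReal) / (ℓ u - ℓ v)}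
  have hS_le : ∀ r ∈ S, ∀ v, φ v ≠ ⊤ → ℓ u < ℓ v → r ≤ ((φ v).toReal - e) / (ℓ v - ℓ u) := by
    rintro r ⟨v₁, hv₁φ, hv₁, rfl⟩ v hvφ hv
    exact hφ.slope_le_slope_of_isMinOn_hyperplane ℓ hmin he (hcoe v₁ hv₁φ) (hcoe v hvφ) hv₁ hv
  have hS_bdd : BddAbove S := ⟨_, fun r hr => hS_le r hr q hqφ hq⟩
  refine ⟨sSup S, fun v => ?_⟩
  rcases eq_or_ne (φ v) ⊤ with hvφ | hvφ
  · simp [hvφ]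
  suffices sSup S * (ℓ v - ℓ u) ≤ (φ v).toReal - e by
    rw [he, hcoe v hvφ, ← EReal.coe_add, EReal.coe_le_coe_iff]
    linarith
  rcases lt_trichotomy (ℓ v) (ℓ u) with hv | hv | hv
  · have := le_csSup hS_bdd ⟨v, hvφ, hv, rfl⟩
    rw [div_le_iff₀ (by linarith)] at this
    nlinarith
  · have : φ u ≤ φ v := hmin hv
    rw [he, hcoe v hvφ, EReal.coe_le_coe_iff] at this
    rw [hv, sub_self, mul_zero]
    linarith
  · have := csSup_le (⟨_, p, hpφ, hp, rfl⟩ : S.Nonempty) fun r hr => hS_le r hr v hvφ hv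
    rwa [le_div_iff₀ (by linarith)] at this

end ERealConvex

theorem nonsmooth_lagrange_multiplier_general (X : Type*) [NormedAddCommGroup X] [NormedSpace ℝ X]
    (E : X → EReal) (hEbot : ∀ x, E x ≠ ⊥)
    (hEconv : ∀ x y : X, ∀ a b : ℝ, 0 ≤ a → 0 ≤ b → a + b = 1 →
      E (a • x + b • y) ≤ (a : EReal) * E x + (b : EReal) * E y)
    (G : X → ℝ) (hGcont : Continuous G)
    (u : X) (hGu : G u = 1)
    (hmin : ∀ v : X, G v = 1 → E u ≤ E v)
    (ut : X) (h1 : E (u + ut) < E u) (h2 : G (u + ut) < 1) (h3 : E (u - ut) < ⊤) :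
    ∀ f : X →L[ℝ] ℝ, (∀ v : X, (G u : ℝ) + f (v - u) ≤ G v) →
      ∃ t : ℝ, 0 ≤ t ∧ ∃ g : X →L[ℝ] ℝ,
        (∀ v : X, E u + ((g (v - u) : ℝ) : EReal) ≤ E v) ∧ f = t • g := by
  intro f hf
  have hE : ERealConvex E := hEconv
  have hfut : f ut < 0 := by
    have := hf (u + ut)
    rw [add_sub_cancel_left, hGu] at this
    linarith
  have hsuper : IsMinOn E {v | 1 ≤ G v} u :=
    hE.isMinOn_setOf_le_of_isMinOn_setOf_eq hGcont (isMinOn_iff.2 hmin) h2.le h1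
  have hplane : IsMinOn E {w | (f : X →ₗ[ℝ] ℝ) w = f u} u := by
    refine isMinOn_iff.2 fun w hw => hsuper ?_
    simpa [hGu, map_sub, show f w = f u from hw] using hf w
  obtain ⟨m, hm⟩ := hE.exists_slope_of_isMinOn_hyperplane hEbot (f : X →ₗ[ℝ] ℝ) hplane
    (p := u + ut) (q := u - ut) (by rw [ContinuousLinearMap.coe_coe, map_add]; linarith)
    (by rw [ContinuousLinearMap.coe_coe, map_sub]; linarith) (ne_top_of_lt h1) h3.ne
  have hm_pos : 0 < m := by
    by_contra! hm0
    have hdescent := hm (u + ut)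
    rw [ContinuousLinearMap.coe_coe, map_add, add_sub_cancel_left] at hdescent
    have hslope : (0 : EReal) ≤ ((m * f ut : ℝ) : EReal) :=
      EReal.coe_nonneg.2 (mul_nonneg_of_nonpos_of_nonpos hm0 hfut.le)
    exact h1.not_ge ((le_add_of_nonneg_right hslope).trans hdescent)
  refine ⟨m⁻¹, inv_nonneg.2 hm_pos.le, m • f, fun v => by
    rw [smul_apply, smul_eq_mul, map_sub]
    exact hm v, ?_⟩
  rw [smul_smul, inv_mul_cancel₀ hm_pos.ne', one_smul]

/-- nonsmooth Lagrange multiplier rule. X is a real normed space,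
E : X → (-∞,∞] convex, G : X → ℝ convex and continuous, u a minimizer of E on {G = 1},
and ũ satisfies E(u+ũ) < E(u), G(u+ũ) < 1, E(u-ũ) < ∞. Then every subgradient of G at u
is a nonnegative multiple of a subgradient of E at u: ∂G(u) ⊆ ⋃_{t≥0} t ∂E(u). -/
theorem nonsmooth_lagrange_multiplier (X : Type*) [NormedAddCommGroup X] [NormedSpace ℝ X]
    (E : X → EReal) (hEbot : ∀ x, E x ≠ ⊥)
    (hEconv : ∀ x y : X, ∀ a b : ℝ, 0 ≤ a → 0 ≤ b → a + b = 1 →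
      E (a • x + b • y) ≤ (a : EReal) * E x + (b : EReal) * E y)
    (G : X → ℝ) (hGconv : ConvexOn ℝ Set.univ G) (hGcont : Continuous G)
    (u : X) (hGu : G u = 1)
    (hmin : ∀ v : X, G v = 1 → E u ≤ E v)
    (ut : X) (h1 : E (u + ut) < E u) (h2 : G (u + ut) < 1) (h3 : E (u - ut) < ⊤) :
    ∀ f : X →L[ℝ] ℝ, (∀ v : X, (G u : ℝ) + f (v - u) ≤ G v) →
      ∃ t : ℝ, 0 ≤ t ∧ ∃ g : X →L[ℝ] ℝ,
        (∀ v : X, E u + ((g (v - u) : ℝ) : EReal) ≤ E v) ∧ f = t • g :=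
  nonsmooth_lagrange_multiplier_general X E hEbot hEconv G hGcont u hGu hmin ut h1 h2 h3
end
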